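/- arXiv:1804.02259 — 2 statements merged into one kernel-verified Lean document; each statement's English description precedes it below -/
import Mathlib

section
/- Let G be a finite simple graph, c: V(G) → ℝ_{>0}, and κ: V(G) → ℤ with 0 ≤ κ(u) ≤ d(u) for all u. If α(G,c,κ) = ∑_{u∈V(G)} c(u)(κ(u)+1)/(d(u)+1), then for every vertex u of G: c(u) = c(u)(κ(u)+1)/(d(u)+1) + ∑_{v∈N(u)} c(v)(κ(v)+1)/(d(v)+1) − ∑_{v∈N(u)} c(v)κ(v)/d(v). -/
variable {V : Type*} [Fintype V] [DecidableEq V]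

/-- A list of vertices witnesses κ-degeneracy: each vertex has at most κ of it
neighbors among the earlier vertices of the ordering. -/
def DegenList (G : SimpleGraph V) [DecidableRel G.Adj] (κ : V → ℤ) (l : List V) : Prop :=
  l.Nodup ∧ ∀ i : Fin l.length,
    ((((l.take i).toFinset).filter (fun v => G.Adj (l.get i) v)).card : ℤ) ≤ κ (l.get i)

/-- A set of vertices is κ-degenerate if it admits a suitable linear ordering. -/
def IsDegen (G : SimpleGraph V) [DecidableRel G.Adj] (κ : V → ℤ) (I : Finset V) : Prop :=
  ∃ l : List V, l.toFinset = I ∧ DegenList G κ l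

/-- Maximum c-weight of a κ-degenerate set of vertices. -/
noncomputable def alphaW (G : SimpleGraph V) [DecidableRel G.Adj] (c : V → ℝ) (κ : V → ℤ) : ℝ :=
  sSup {x : ℝ | ∃ I : Finset V, IsDegen G κ I ∧ x = ∑ u ∈ I, c u}

/-!
For an ordering `σ` of the vertices, the vertices preceded by at most `κ v` of their neighbours
form a `κ`-degenerate set, so its weight is at most `α`. Over all orderings, `v` is in this set
for a fraction `(κ v + 1) / (d v + 1)` of them, so the average weight is exactly the bound;
under extremality every ordering therefore attains it. Averaging instead over the orderings that
put `u` first, `u` is always in the set, a neighbour `v` of `u` is in it for a fraction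
`κ v / d v` of them, and every other vertex keeps the fraction `(κ v + 1) / (d v + 1)`. Equating
this average with the bound gives the identity.
-/

open Finset

theorem card_filter_card_filter_lt_lt {α β : Type*} [LinearOrder β] {f : α → β}
    {s : Finset α} (hf : Set.InjOn f s) {k : ℕ} (hk : k ≤ #s) :
    #{x ∈ s | #{y ∈ s | f y < f x} < k} = k := by
  set g : α → ℕ := fun x => #{y ∈ s | f y < f x}
  have hg_lt : ∀ x ∈ s, g x < #s := fun x hx =>
    card_lt_card (filter_ssubset.mpr ⟨x, hx, lt_irrefl _⟩)
  have hg_mono : ∀ x ∈ s, ∀ y ∈ s, f x < f y → g x < g y := fun x hx y _ hxy =>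
    card_lt_card <| (ssubset_iff_of_subset fun z hz => by
      simp only [mem_filter] at hz ⊢; exact ⟨hz.1, hz.2.trans hxy⟩).mpr
        ⟨x, by simp [hx, hxy], by simp⟩
  have hg_inj : Set.InjOn g s := by
    intro x hx y hy hgxy
    by_contra hne
    rcases lt_or_gt_of_ne (hf.ne hx hy hne) with h | h
    · exact (hg_mono x hx y hy h).ne hgxy
    · exact (hg_mono y hy x hx h).ne' hgxy
  have himage : s.image g = range #s :=
    eq_of_subset_of_card_le (fun n hn => by
        obtain ⟨x, hx, rfl⟩ := mem_image.mp hn; exact mem_range.mpr (hg_lt x hx))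
      (by rw [card_range, card_image_of_injOn hg_inj])
  calc #{x ∈ s | g x < k}
      = #({x ∈ s | g x < k}.image g) :=
        (card_image_of_injOn (hg_inj.mono (coe_subset.mpr (filter_subset _ _)))).symm
    _ = #{n ∈ range #s | n < k} := by rw [← himage, filter_image]
    _ = k := by
        rw [show {n ∈ range #s | n < k} = range k by ext; simp; omega, card_range]

section Rank

variable {W : Type*} {m : ℕ}

/-- An ordering of `W` is an equivalence `σ : W ≃ Fin m`; this counts the elements of `s` that
come before `v`. -/
def rankIn (σ : W ≃ Fin m) (v : W) (s : Finset W) : ℕ := #{x ∈ s | σ x < σ v}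

theorem rankIn_eq_zero {σ : W ≃ Fin m} {v : W} {s : Finset W} (h : ∀ x, σ v ≤ σ x) :
    rankIn σ v s = 0 := by
  simpa [rankIn, filter_eq_empty_iff] using fun x _ => h x

variable [DecidableEq W]

theorem rankIn_insert_self (σ : W ≃ Fin m) (v : W) (s : Finset W) :
    rankIn σ v (insert v s) = rankIn σ v s := by
  simp [rankIn, filter_insert]

theorem rankIn_erase_add {σ : W ≃ Fin m} {u v : W} {s : Finset W} (h : σ u < σ v) :
    rankIn σ v (s.erase u) + (if u ∈ s then 1 else 0) = rankIn σ v s := by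
  rw [rankIn, rankIn, filter_erase, card_erase_eq_ite]
  by_cases hu : u ∈ s
  · have hmem : u ∈ {x ∈ s | σ x < σ v} := mem_filter.mpr ⟨hu, h⟩
    have hpos := card_pos.mpr ⟨u, hmem⟩
    rw [if_pos hmem, if_pos hu]; omega
  · simp [hu]

theorem rankIn_swap_trans (σ : W ≃ Fin m) {s : Finset W} {w x : W} (hw : w ∈ s)
    (hx : x ∈ s) :
    rankIn ((Equiv.swap w x).trans σ) w s = rankIn σ x s := by
  have hswap : ∀ y ∈ s, Equiv.swap w x y ∈ s := fun y hy => by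
    rw [Equiv.swap_apply_def]; split_ifs <;> assumption
  refine card_nbij' (Equiv.swap w x) (Equiv.swap w x) ?_ ?_ ?_ ?_
  · intro y hy
    simp only [coe_filter, Set.mem_ofPred_eq, Equiv.trans_apply, Equiv.swap_apply_left] at hy ⊢
    exact ⟨hswap y hy.1, hy.2⟩
  · intro y hy
    simp only [coe_filter, Set.mem_ofPred_eq, Equiv.trans_apply, Equiv.swap_apply_left,
      Equiv.swap_apply_self] at hy ⊢
    exact ⟨hswap y hy.1, hy.2⟩
  · intro y _; exact Equiv.swap_apply_self _ _ _
  · intro y _; exact Equiv.swap_apply_self _ _ _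

/-- If `P` is closed under permuting `s`, the position of `w` within `s` is uniformly distributed
over `P`: swapping `w` with `x` shows all `x ∈ s` share the same count, and in each single
ordering exactly `k` elements of `s` have position `< k`. -/
theorem card_filter_rankIn_lt_mul {P : Finset (W ≃ Fin m)} {s : Finset W} {w : W} (hw : w ∈ s)
    (hP : ∀ σ ∈ P, ∀ x ∈ s, (Equiv.swap w x).trans σ ∈ P) {k : ℕ} (hk : k ≤ #s) :
    #{σ ∈ P | rankIn σ w s < k} * #s = k * #P := by
  have hsymm : ∀ x ∈ s, #{σ ∈ P | rankIn σ x s < k} = #{σ ∈ P | rankIn σ w s < k} := by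
    intro x hx
    have hinv : ∀ σ : W ≃ Fin m, (Equiv.swap w x).trans ((Equiv.swap w x).trans σ) = σ := by
      intro σ; rw [← Equiv.trans_assoc, Equiv.swap_swap, Equiv.refl_trans]
    refine card_nbij' ((Equiv.swap w x).trans ·) ((Equiv.swap w x).trans ·) ?_ ?_
      (fun σ _ => hinv σ) (fun σ _ => hinv σ)
    · intro σ hσ
      simp only [coe_filter, Set.mem_ofPred_eq] at hσ ⊢
      exact ⟨hP σ hσ.1 x hx, (rankIn_swap_trans σ hw hx).trans_lt hσ.2⟩
    · intro σ hσ
      simp only [coe_filter, Set.mem_ofPred_eq] at hσ ⊢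
      refine ⟨hP σ hσ.1 x hx, ?_⟩
      rw [Equiv.swap_comm, rankIn_swap_trans σ hx hw]
      exact hσ.2
  calc #{σ ∈ P | rankIn σ w s < k} * #s
      = ∑ x ∈ s, #{σ ∈ P | rankIn σ x s < k} := by
        rw [sum_const_nat hsymm, mul_comm]
    _ = ∑ σ ∈ P, #{x ∈ s | rankIn σ x s < k} :=
        (sum_card_bipartiteAbove_eq_sum_card_bipartiteBelow _).symm
    _ = k * #P :=
        (sum_const_nat fun σ _ => card_filter_card_filter_lt_lt σ.injective.injOn hk).trans
          (mul_comm _ _)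

theorem sum_sum_filter_rankIn_le {P : Finset (W ≃ Fin m)} {A : Finset W} {T : W → Finset W}
    {j : W → ℤ} (c : W → ℝ) (hT : ∀ v ∈ A, v ∉ T v)
    (hj : ∀ v ∈ A, -1 ≤ j v ∧ j v ≤ #(T v))
    (hP : ∀ σ ∈ P, ∀ v ∈ A, ∀ x ∈ T v, (Equiv.swap v x).trans σ ∈ P) :
    ∑ σ ∈ P, ∑ v ∈ A with (rankIn σ v (T v) : ℤ) ≤ j v, c v
      = #P * ∑ v ∈ A, c v * (j v + 1) / (#(T v) + 1) := by
  have hcount : ∀ v ∈ A,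
      (#{σ ∈ P | (rankIn σ v (T v) : ℤ) ≤ j v} : ℝ) * (#(T v) + 1) = (j v + 1) * #P := by
    intro v hv
    have hk : (j v + 1).toNat ≤ #(insert v (T v)) := by
      rw [card_insert_of_notMem (hT v hv)]; have := hj v hv; omega
    have hPs : ∀ σ ∈ P, ∀ x ∈ insert v (T v), (Equiv.swap v x).trans σ ∈ P := by
      intro σ hσ x hx
      rcases mem_insert.mp hx with rfl | hx
      · rwa [Equiv.swap_self, Equiv.refl_trans]
      · exact hP σ hσ v hv x hx
    have h := card_filter_rankIn_lt_mul (mem_insert_self v (T v)) hPs hk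
    rw [card_insert_of_notMem (hT v hv)] at h
    have hfilter : {σ ∈ P | (rankIn σ v (T v) : ℤ) ≤ j v}
        = {σ ∈ P | rankIn σ v (insert v (T v)) < (j v + 1).toNat} :=
      filter_congr fun σ _ => by rw [rankIn_insert_self]; omega
    have hZ : (#{σ ∈ P | (rankIn σ v (T v) : ℤ) ≤ j v} : ℤ) * (#(T v) + 1)
        = (j v + 1) * #P := by
      rw [hfilter, ← Int.toNat_of_nonneg (by linarith [(hj v hv).1] : 0 ≤ j v + 1)]
      exact_mod_cast h
    exact_mod_cast hZ
  calc ∑ σ ∈ P, ∑ v ∈ A with (rankIn σ v (T v) : ℤ) ≤ j v, c v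
      = ∑ v ∈ A, ∑ σ ∈ P with (rankIn σ v (T v) : ℤ) ≤ j v, c v :=
        sum_sum_bipartiteAbove_eq_sum_sum_bipartiteBelow (r := fun σ v => _) _
    _ = #P * ∑ v ∈ A, c v * (j v + 1) / (#(T v) + 1) := by
        rw [mul_sum]
        refine sum_congr rfl fun v hv => ?_
        rw [sum_const, nsmul_eq_mul]
        field_simp
        linear_combination c v * hcount v hv

end Rank

section Greedy

variable (G : SimpleGraph V) [DecidableRel G.Adj] (κ : V → ℤ) {m : ℕ}

def greedySet (σ : V ≃ Fin m) : Finset V :=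
  {v | (rankIn σ v (G.neighborFinset v) : ℤ) ≤ κ v}

theorem isDegen_greedySet (σ : V ≃ Fin m) : IsDegen G κ (greedySet G κ σ) := by
  set l := ((List.finRange m).map σ.symm).filter (· ∈ greedySet G κ σ)
  have hsorted : l.Pairwise (fun a b => σ a < σ b) :=
    ((List.pairwise_lt_finRange m).map σ.symm fun a b hab => by simpa using hab).sublist
      List.filter_sublist
  refine ⟨l, ?_, ((List.nodup_finRange m).map σ.symm.injective).filter _, fun i => ?_⟩
  · ext x
    simpa [l] using fun _ => ⟨σ x, σ.symm_apply_apply x⟩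
  set w := l.get i
  have hw : w ∈ greedySet G κ σ := of_decide_eq_true (List.mem_filter.mp (List.get_mem l i)).2
  have hearlier : ∀ x ∈ l.take i, σ x < σ w := by
    have h := List.pairwise_append.mp ((List.take_append_drop i l).symm ▸ hsorted)
    refine fun x hx => h.2.2 x hx w ?_
    rw [List.drop_eq_getElem_cons i.isLt]
    exact List.mem_cons_self
  have hsub :
      {v ∈ (l.take i).toFinset | G.Adj w v} ⊆ {x ∈ G.neighborFinset w | σ x < σ w} := by
    intro x hx
    rw [mem_filter, List.mem_toFinset] at hx
    exact mem_filter.mpr ⟨(G.mem_neighborFinset _ _).mpr hx.2, hearlier x hx.1⟩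
  exact (Nat.cast_le.mpr (card_le_card hsub)).trans (mem_filter.mp hw).2

end Greedy

theorem sum_le_alphaW (G : SimpleGraph V) [DecidableRel G.Adj] (c : V → ℝ) (κ : V → ℤ)
    {I : Finset V} (hI : IsDegen G κ I) : ∑ u ∈ I, c u ≤ alphaW G c κ :=
  le_csSup ((Set.finite_range fun J : Finset V => ∑ u ∈ J, c u).subset
    (by rintro x ⟨J, -, rfl⟩; exact ⟨J, rfl⟩)).bddAbove ⟨I, hI, rfl⟩

theorem sum_sum_greedySet {G : SimpleGraph V} [DecidableRel G.Adj] {κ : V → ℤ} (c : V → ℝ)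
    (hκ : ∀ u, 0 ≤ κ u ∧ κ u ≤ (G.degree u : ℤ)) {m : ℕ} :
    ∑ σ : V ≃ Fin m, ∑ v ∈ greedySet G κ σ, c v
      = Fintype.card (V ≃ Fin m) * ∑ v, c v * ((κ v : ℝ) + 1) / (G.degree v + 1) :=
  sum_sum_filter_rankIn_le c (fun v _ => G.notMem_neighborFinset_self v)
    (fun v _ => ⟨by linarith [(hκ v).1], (hκ v).2⟩) (fun _ _ _ _ _ _ => mem_univ _)

theorem sum_greedySet_eq_of_alphaW_eq {G : SimpleGraph V} [DecidableRel G.Adj] {κ : V → ℤ}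
    (c : V → ℝ) (hκ : ∀ u, 0 ≤ κ u ∧ κ u ≤ (G.degree u : ℤ))
    (hext : alphaW G c κ = ∑ u : V, c u * ((κ u : ℝ) + 1) / (G.degree u + 1))
    {m : ℕ} (σ : V ≃ Fin m) :
    ∑ v ∈ greedySet G κ σ, c v = ∑ v, c v * ((κ v : ℝ) + 1) / (G.degree v + 1) := by
  have hle : ∀ τ ∈ (univ : Finset (V ≃ Fin m)),
      ∑ v ∈ greedySet G κ τ, c v ≤ ∑ v, c v * ((κ v : ℝ) + 1) / (G.degree v + 1) :=
    fun τ _ => hext ▸ sum_le_alphaW G c κ (isDegen_greedySet G κ τ)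
  refine (sum_eq_sum_iff_of_le hle).mp ?_ σ (mem_univ σ)
  rw [sum_sum_greedySet c hκ, sum_const, card_univ, nsmul_eq_mul]

theorem greedySet_eq_insert_of_forall_le (G : SimpleGraph V) [DecidableRel G.Adj] {κ : V → ℤ}
    {m : ℕ} {σ : V ≃ Fin m} {u : V} (hκu : 0 ≤ κ u) (hσ : ∀ v, σ u ≤ σ v) :
    greedySet G κ σ = insert u {v ∈ univ.erase u |
      (rankIn σ v ((G.neighborFinset v).erase u) : ℤ) ≤
        κ v - if G.Adj u v then 1 else 0} := by
  ext v
  by_cases hvu : v = u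
  · subst hvu
    simpa [greedySet, rankIn_eq_zero hσ] using hκu
  have hlt : σ u < σ v := (hσ v).lt_of_ne (σ.injective.ne (Ne.symm hvu))
  have hrank := rankIn_erase_add (s := G.neighborFinset v) hlt
  simp only [greedySet, mem_filter, mem_univ, true_and, mem_insert, mem_erase, hvu, false_or,
    ne_eq, not_false_eq_true, ← hrank, G.mem_neighborFinset, G.adj_comm v u]
  split_ifs <;> push_cast <;> omega

def orderingsWithFirst (u : V) (m : ℕ) : Finset (V ≃ Fin m) := {σ | ∀ v, σ u ≤ σ v}

theorem orderingsWithFirst_nonempty (u : V) : (orderingsWithFirst u (Fintype.card V)).Nonempty := by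
  let σ₀ := Fintype.equivFin V
  have hm : 0 < Fintype.card V := Fintype.card_pos_iff.mpr ⟨u⟩
  refine ⟨σ₀.trans (Equiv.swap (σ₀ u) ⟨0, hm⟩),
    mem_filter.mpr ⟨mem_univ _, fun v => ?_⟩⟩
  simp only [Equiv.trans_apply, Equiv.swap_apply_left]
  exact Nat.zero_le _

theorem swap_trans_mem_orderingsWithFirst {u v x : V} {m : ℕ} {σ : V ≃ Fin m}
    (hσ : σ ∈ orderingsWithFirst u m) (hv : v ≠ u) (hx : x ≠ u) :
    (Equiv.swap v x).trans σ ∈ orderingsWithFirst u m := by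
  refine mem_filter.mpr ⟨mem_univ _, fun y => ?_⟩
  rw [Equiv.trans_apply, Equiv.swap_apply_of_ne_of_ne hv.symm hx.symm]
  exact (mem_filter.mp hσ).2 _

theorem sum_sum_greedySet_orderingsWithFirst (G : SimpleGraph V) [DecidableRel G.Adj]
    (c : V → ℝ) {κ : V → ℤ} (hκ : ∀ u, 0 ≤ κ u ∧ κ u ≤ (G.degree u : ℤ))
    (u : V) {m : ℕ} :
    ∑ σ ∈ orderingsWithFirst u m, ∑ v ∈ greedySet G κ σ, c v
      = #(orderingsWithFirst u m) * (c u + ∑ v ∈ univ.erase u,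
        if G.Adj u v then c v * κ v / G.degree v
        else c v * ((κ v : ℝ) + 1) / (G.degree v + 1)) := by
  set j : V → ℤ := fun v => κ v - if G.Adj u v then 1 else 0
  have hj : ∀ v ∈ univ.erase u, -1 ≤ j v ∧ j v ≤ #((G.neighborFinset v).erase u) := by
    intro v _
    have := hκ v
    simp only [j, card_erase_eq_ite, G.mem_neighborFinset, G.adj_comm v u,
      G.card_neighborFinset_eq_degree]
    split_ifs with h
    · have := G.degree_pos_iff_exists_adj v |>.mpr ⟨u, h.symm⟩
      omega
    · omega
  have hterm : ∀ v, c v * ((j v : ℝ) + 1) / (#((G.neighborFinset v).erase u) + 1)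
      = if G.Adj u v then c v * κ v / G.degree v
        else c v * ((κ v : ℝ) + 1) / (G.degree v + 1) := by
    intro v
    by_cases h : G.Adj u v
    · have hdeg : ((#((G.neighborFinset v).erase u) : ℕ) : ℝ) + 1 = G.degree v := by
        exact_mod_cast card_erase_add_one ((G.mem_neighborFinset _ _).mpr h.symm)
      simp only [j, if_pos h, hdeg]
      push_cast
      ring
    · rw [erase_eq_of_notMem (mt (G.mem_neighborFinset _ _).mp fun h' => h h'.symm)]
      simp only [j, if_neg h, G.card_neighborFinset_eq_degree]
      push_cast
      ring
  rw [sum_congr rfl fun σ hσ => by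
      rw [greedySet_eq_insert_of_forall_le G (hκ u).1 (mem_filter.mp hσ).2,
        sum_insert fun hu => notMem_erase u _ (mem_filter.mp hu).1],
    sum_add_distrib, sum_const, nsmul_eq_mul,
    sum_sum_filter_rankIn_le c (fun v _ => by simp) hj
      fun σ hσ v hv x hx => swap_trans_mem_orderingsWithFirst hσ (ne_of_mem_erase hv)
        (ne_of_mem_erase hx),
    mul_add, sum_congr rfl fun v _ => hterm v]

theorem sum_eq_add_sum_of_alphaW_eq (G : SimpleGraph V) [DecidableRel G.Adj] (c : V → ℝ)
    {κ : V → ℤ} (hκ : ∀ u, 0 ≤ κ u ∧ κ u ≤ (G.degree u : ℤ))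
    (hext : alphaW G c κ = ∑ u : V, c u * ((κ u : ℝ) + 1) / (G.degree u + 1)) (u : V) :
    ∑ v, c v * ((κ v : ℝ) + 1) / (G.degree v + 1) = c u + ∑ v ∈ univ.erase u,
      if G.Adj u v then c v * κ v / G.degree v
      else c v * ((κ v : ℝ) + 1) / (G.degree v + 1) := by
  have h := sum_sum_greedySet_orderingsWithFirst G c hκ u (m := Fintype.card V)
  rw [sum_congr rfl fun σ _ => sum_greedySet_eq_of_alphaW_eq c hκ hext σ, sum_const,
    nsmul_eq_mul] at h
  exact mul_left_cancel₀ (Nat.cast_ne_zero.mpr (orderingsWithFirst_nonempty u).card_pos.ne') h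

theorem extremal_local_identity_alpha_general (G : SimpleGraph V) [DecidableRel G.Adj]
    (c : V → ℝ)
    (κ : V → ℤ) (hκ : ∀ u, 0 ≤ κ u ∧ κ u ≤ (G.degree u : ℤ))
    (hext : alphaW G c κ = ∑ u : V, c u * ((κ u : ℝ) + 1) / (G.degree u + 1)) :
    ∀ u : V, c u = c u * ((κ u : ℝ) + 1) / (G.degree u + 1)
      + ∑ v ∈ G.neighborFinset u, c v * ((κ v : ℝ) + 1) / (G.degree v + 1)
      - ∑ v ∈ G.neighborFinset u, c v * (κ v : ℝ) / (G.degree v) := by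
  intro u
  have h := sum_eq_add_sum_of_alphaW_eq G c hκ hext u
  have hN : {v ∈ univ.erase u | G.Adj u v} = G.neighborFinset u := by
    ext v
    simpa using fun h => (G.ne_of_adj h).symm
  rw [← add_sum_erase _ _ (mem_univ u), sum_ite, hN,
    ← sum_filter_add_sum_filter_not (univ.erase u) (G.Adj u), hN] at h
  linarith

/-- Key local identity for extremal triples of the weighted degenerate-set bound. -/
theorem extremal_local_identity_alpha (G : SimpleGraph V) [DecidableRel G.Adj]
    (c : V → ℝ) (hc : ∀ u, 0 < c u)
    (κ : V → ℤ) (hκ : ∀ u, 0 ≤ κ u ∧ κ u ≤ (G.degree u : ℤ))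
    (hext : alphaW G c κ = ∑ u : V, c u * ((κ u : ℝ) + 1) / (G.degree u + 1)) :
    ∀ u : V, c u = c u * ((κ u : ℝ) + 1) / (G.degree u + 1)
      + ∑ v ∈ G.neighborFinset u, c v * ((κ v : ℝ) + 1) / (G.degree v + 1)
      - ∑ v ∈ G.neighborFinset u, c v * (κ v : ℝ) / (G.degree v) :=
  extremal_local_identity_alpha_general G c κ hκ hext
end

section
/- Let G be a finite simple graph, c: V(G) → ℝ_{>0}, κ: V(G) → ℤ with 0 ≤ κ(u) ≤ d(u) for all u, and suppose β(G,c,κ) = ∑_{u∈V(G)} c(u)(d(u)−κ(u))(d(u)−κ(u)+1)/(2(d(u)+1)). Then for every vertex u of G: c(u)(d(u)−κ(u)) = c(u)(d(u)−κ(u))(d(u)−κ(u)+1)/(2(d(u)+1)) + ∑_{v∈N(u)} c(v)(d(v)−κ(v))(d(v)−κ(v)+1)/(2(d(v)+1)) − ∑_{v∈N(u)} c(v)(d(v)−κ(v)−1)(d(v)−κ(v))/(2d(v)). -/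
variable {V : Type*} [Fintype V] [DecidableEq V]

/-- Minimum total c-weighted increase ι making the whole vertex set (κ+ι)-degenerate. -/
noncomputable def betaW (G : SimpleGraph V) [DecidableRel G.Adj] (c : V → ℝ) (κ : V → ℤ) : ℝ :=
  sInf {x : ℝ | ∃ ι : V → ℤ, (∀ u, 0 ≤ ι u) ∧
    IsDegen G (fun u => κ u + ι u) Finset.univ ∧ x = ∑ u : V, c u * (ι u : ℝ)}

/-!
Every ordering `σ` of the vertices yields an admissible `ι`: the amount by which the number of
earlier neighbours of each vertex exceeds `κ`. So `betaW G c κ` is at most the cost of every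
ordering. Swapping a vertex `w` in turn with each element of `insert w N` moves it through every
rank within that set, so over any family of orderings closed under these swaps the number of
elements of `N` before `w` is uniform on `{0, …, #N}`. Over all orderings this makes the mean cost
equal to the right-hand side of the extremality hypothesis; hence every ordering costs exactly
`betaW G c κ`. Averaging instead over the orderings that put `u` last, where `u` sees all its
neighbours before it and each neighbour of `u` has one candidate fewer, gives the identity at `u`.
-/

open Finset

section Orderings

variable {α : Type*} {n : ℕ}

def countBefore (σ : Fin n ≃ α) (s : Finset α) (x : α) : ℕ :=
  #{y ∈ s | σ.symm y < σ.symm x}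

theorem countBefore_lt_countBefore {σ : Fin n ≃ α} {s : Finset α} {x y : α} (hx : x ∈ s)
    (hxy : σ.symm x < σ.symm y) : countBefore σ s x < countBefore σ s y := by
  refine card_lt_card ((ssubset_iff_of_subset fun z hz => ?_).2 ⟨x, ?_, ?_⟩)
  · simp only [mem_filter] at hz ⊢
    exact ⟨hz.1, hz.2.trans hxy⟩
  · simp [hx, hxy]
  · simp

theorem countBefore_lt_card {σ : Fin n ≃ α} {s : Finset α} {x : α} (hx : x ∈ s) :
    countBefore σ s x < #s :=
  card_lt_card (filter_ssubset.2 ⟨x, hx, lt_irrefl _⟩)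

theorem injOn_countBefore (σ : Fin n ≃ α) (s : Finset α) : Set.InjOn (countBefore σ s) s := by
  intro x hx y hy hxy
  rcases lt_trichotomy (σ.symm x) (σ.symm y) with h | h | h
  · exact absurd hxy (countBefore_lt_countBefore hx h).ne
  · exact σ.symm.injective h
  · exact absurd hxy (countBefore_lt_countBefore hy h).ne'

theorem sum_countBefore_self {M : Type*} [AddCommMonoid M] (σ : Fin n ≃ α) (s : Finset α)
    (F : ℕ → M) : ∑ x ∈ s, F (countBefore σ s x) = ∑ j ∈ range #s, F j := by
  have himage : s.image (countBefore σ s) = range #s :=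
    eq_of_subset_of_card_le
      (fun j hj => by
        obtain ⟨x, hx, rfl⟩ := mem_image.1 hj
        exact mem_range.2 (countBefore_lt_card hx))
      (by rw [card_range, card_image_of_injOn (injOn_countBefore σ s)])
  rw [← himage, sum_image (injOn_countBefore σ s)]

/-- `w` takes over the slot of `x`, and the swap matches the elements of `s` before it with
those of `insert w s` that were before `x`. -/
theorem countBefore_trans_swap [DecidableEq α] {σ : Fin n ≃ α} {s : Finset α} {w x : α}
    (hw : w ∉ s) (hx : x ∈ insert w s) :
    countBefore (σ.trans (Equiv.swap w x)) s w = countBefore σ (insert w s) x := by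
  obtain rfl | hxs := mem_insert.1 hx
  · simp [countBefore, filter_insert]
  have hxw : x ≠ w := ne_of_mem_of_not_mem hxs hw
  refine card_nbij' (Equiv.swap w x) (Equiv.swap w x) ?_ ?_ (fun y _ => by simp)
    (fun y _ => by simp)
  all_goals
    intro y
    simp only [coe_filter, Set.mem_ofPred_eq, Equiv.symm_trans_apply, Equiv.symm_swap,
      Equiv.swap_apply_left, mem_insert, Equiv.swap_apply_def]
    grind

theorem sum_trans_swap [DecidableEq α] {M : Type*} [AddCommMonoid M] {S : Finset (Fin n ≃ α)}
    {w x : α} (hS : ∀ σ ∈ S, σ.trans (Equiv.swap w x) ∈ S) (f : (Fin n ≃ α) → M) :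
    ∑ σ ∈ S, f (σ.trans (Equiv.swap w x)) = ∑ σ ∈ S, f σ :=
  sum_nbij' _ _ hS hS (fun σ _ => by simp [Equiv.trans_assoc])
    (fun σ _ => by simp [Equiv.trans_assoc]) (fun _ _ => rfl)

/-- On a family of orderings closed under swapping `w` with the elements of `s`, the number of
elements of `s` before `w` is uniformly distributed on `{0, …, #s}`. -/
theorem card_nsmul_sum_countBefore [DecidableEq α] {M : Type*} [AddCommMonoid M]
    {S : Finset (Fin n ≃ α)} {w : α} {s : Finset α} (hw : w ∉ s)
    (hS : ∀ σ ∈ S, ∀ x ∈ insert w s, σ.trans (Equiv.swap w x) ∈ S) (F : ℕ → M) :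
    (#s + 1) • ∑ σ ∈ S, F (countBefore σ s w) = #S • ∑ j ∈ range (#s + 1), F j := by
  calc (#s + 1) • ∑ σ ∈ S, F (countBefore σ s w)
      = ∑ x ∈ insert w s, ∑ σ ∈ S, F (countBefore (σ.trans (Equiv.swap w x)) s w) := by
        rw [← card_insert_of_notMem hw, ← sum_const]
        exact sum_congr rfl fun x hx =>
          (sum_trans_swap (fun σ hσ => hS σ hσ x hx) (fun σ => F (countBefore σ s w))).symm
    _ = ∑ σ ∈ S, ∑ x ∈ insert w s, F (countBefore σ (insert w s) x) := by
        rw [sum_comm]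
        exact sum_congr rfl fun σ _ => sum_congr rfl fun x hx => by
          rw [countBefore_trans_swap hw hx]
    _ = #S • ∑ j ∈ range (#s + 1), F j := by
        simp only [sum_countBefore_self, card_insert_of_notMem hw, sum_const]

theorem two_mul_sum_range_max_sub (m : ℕ) {k : ℤ} (hk : 0 ≤ k) :
    2 * ∑ j ∈ range (m + 1), max 0 ((j : ℤ) - k)
      = max 0 ((m : ℤ) - k) * (max 0 ((m : ℤ) - k) + 1) := by
  induction m with
  | zero => simp [max_eq_left (neg_nonpos.2 hk)]
  | succ m ih =>
    rw [sum_range_succ, mul_add, ih]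
    push_cast
    rcases le_or_gt k m with h | h
    · rw [max_eq_right (by omega), max_eq_right (by omega)]
      ring
    · rw [max_eq_left (by omega), max_eq_left (by omega)]
      ring

theorem max_zero_mul_add_one {a : ℤ} (ha : -1 ≤ a) : max 0 a * (max 0 a + 1) = a * (a + 1) := by
  rcases le_or_gt 0 a with h | h
  · rw [max_eq_right h]
  · obtain rfl : a = -1 := by omega
    norm_num

theorem sum_max_countBefore_sub [DecidableEq α] {S : Finset (Fin n ≃ α)} {w : α} {s : Finset α}
    (hw : w ∉ s) (hS : ∀ σ ∈ S, ∀ x ∈ insert w s, σ.trans (Equiv.swap w x) ∈ S) {k : ℤ}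
    (hk₀ : 0 ≤ k) (hk : k ≤ #s + 1) :
    ∑ σ ∈ S, ((max 0 ((countBefore σ s w : ℤ) - k) : ℤ) : ℝ)
      = #S * (((#s : ℝ) - k) * ((#s : ℝ) - k + 1) / (2 * (#s + 1))) := by
  have huniform := card_nsmul_sum_countBefore hw hS fun j => ((max 0 ((j : ℤ) - k) : ℤ) : ℝ)
  have hgauss : 2 * ∑ j ∈ range (#s + 1), ((max 0 ((j : ℤ) - k) : ℤ) : ℝ)
      = ((#s : ℝ) - k) * ((#s : ℝ) - k + 1) := by
    exact_mod_cast (two_mul_sum_range_max_sub #s hk₀).trans (max_zero_mul_add_one (by omega))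
  rw [nsmul_eq_mul, nsmul_eq_mul, Nat.cast_add_one] at huniform
  field_simp
  linear_combination 2 * huniform + #S * hgauss

theorem mem_take_ofFn_iff (σ : Fin n ≃ α) (i : ℕ) (y : α) :
    y ∈ (List.ofFn σ).take i ↔ (σ.symm y : ℕ) < i := by
  rw [List.mem_take_iff_getElem]
  constructor
  · rintro ⟨j, hj, rfl⟩
    simp only [List.getElem_ofFn, Equiv.symm_apply_apply]
    omega
  · intro h
    exact ⟨σ.symm y, by simp [h], by simp⟩

end Orderings

section LastAt

variable {α : Type*} [Fintype α] [DecidableEq α] {n : ℕ}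

def lastAt (n : ℕ) (u : α) : Finset (Fin n ≃ α) := {σ | ∀ x, σ.symm x ≤ σ.symm u}

theorem lastAt_nonempty (σ : Fin n ≃ α) (u : α) : (lastAt n u).Nonempty := by
  have : Nonempty α := ⟨u⟩
  obtain ⟨x, hx⟩ := Finite.exists_max σ.symm
  refine ⟨σ.trans (Equiv.swap x u), mem_filter.2 ⟨mem_univ _, fun y => ?_⟩⟩
  simpa using hx _

theorem trans_swap_mem_lastAt {σ : Fin n ≃ α} {u w x : α} (hσ : σ ∈ lastAt n u) (hw : w ≠ u)
    (hx : x ≠ u) : σ.trans (Equiv.swap w x) ∈ lastAt n u := by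
  refine mem_filter.2 ⟨mem_univ _, fun y => ?_⟩
  simpa [Equiv.swap_apply_of_ne_of_ne hw.symm hx.symm] using (mem_filter.1 hσ).2 (Equiv.swap w x y)

theorem countBefore_of_mem_lastAt {σ : Fin n ≃ α} {u : α} {s : Finset α} (hσ : σ ∈ lastAt n u)
    (hu : u ∉ s) : countBefore σ s u = #s := by
  refine congrArg card (filter_true_of_mem fun y hy => ?_)
  exact ((mem_filter.1 hσ).2 y).lt_of_ne fun h => hu (σ.symm.injective h ▸ hy)

theorem countBefore_erase_of_mem_lastAt {σ : Fin n ≃ α} {u : α} (hσ : σ ∈ lastAt n u)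
    (s : Finset α) (v : α) : countBefore σ (s.erase u) v = countBefore σ s v := by
  unfold countBefore
  rw [filter_erase, erase_eq_of_notMem]
  simpa using fun _ => (mem_filter.1 hσ).2 v

end LastAt

section Degeneracy

variable {n : ℕ} (G : SimpleGraph V) [DecidableRel G.Adj]

theorem isDegen_univ_of_countBefore_le {κ : V → ℤ} (σ : Fin n ≃ V)
    (h : ∀ v, (countBefore σ (G.neighborFinset v) v : ℤ) ≤ κ v) : IsDegen G κ univ := by
  refine ⟨List.ofFn σ, ?_, List.nodup_ofFn.2 σ.injective, fun i => ?_⟩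
  · ext v
    simpa using ⟨σ.symm v, by simp⟩
  · rw [List.get_ofFn]
    convert h _ using 2
    unfold countBefore
    congr 1
    ext y
    simp [mem_take_ofFn_iff, Fin.lt_def, and_comm]

theorem betaW_le_of_isDegen {c : V → ℝ} (hc : ∀ u, 0 ≤ c u) {κ ι : V → ℤ} (hι : ∀ u, 0 ≤ ι u)
    (hdeg : IsDegen G (fun u => κ u + ι u) univ) : betaW G c κ ≤ ∑ u, c u * (ι u : ℝ) :=
  csInf_le ⟨0, by
    rintro _ ⟨ι', hι', -, rfl⟩
    exact sum_nonneg fun u _ => mul_nonneg (hc u) (Int.cast_nonneg (hι' u))⟩ ⟨ι, hι, hdeg, rfl⟩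

end Degeneracy

section Incentives

variable {n : ℕ} (G : SimpleGraph V) [DecidableRel G.Adj] (c : V → ℝ) (κ : V → ℤ)

/-- The least `ι v ≥ 0` for which `σ` witnesses `(κ + ι)`-degeneracy at `v`. -/
def orderIncentive (σ : Fin n ≃ V) (v : V) : ℤ :=
  max 0 ((countBefore σ (G.neighborFinset v) v : ℤ) - κ v)

def orderCost (σ : Fin n ≃ V) : ℝ := ∑ v, c v * (orderIncentive G κ σ v : ℝ)

/-- The mean of `c v * orderIncentive G κ σ v` over all orderings `σ`. -/
noncomputable def avgIncentive (v : V) : ℝ :=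
  c v * (((G.degree v : ℝ) - κ v) * ((G.degree v : ℝ) - κ v + 1)) / (2 * (G.degree v + 1))

/-- The mean of `c v * orderIncentive G κ σ v` over the orderings `σ` in which a given
neighbour of `v` comes last. -/
noncomputable def avgIncentiveBefore (v : V) : ℝ :=
  c v * (((G.degree v : ℝ) - κ v - 1) * ((G.degree v : ℝ) - κ v)) / (2 * (G.degree v : ℝ))

variable {G c κ}

theorem betaW_le_orderCost (hc : ∀ u, 0 ≤ c u) (σ : Fin n ≃ V) :
    betaW G c κ ≤ orderCost G c κ σ :=
  betaW_le_of_isDegen G hc (fun _ => le_max_left _ _) <|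
    isDegen_univ_of_countBefore_le G σ fun _ => sub_le_iff_le_add'.1 (le_max_right _ _)

theorem sum_orderIncentive_of_trans_swap_mem {S : Finset (Fin n ≃ V)} {v : V}
    (hκ : 0 ≤ κ v ∧ κ v ≤ G.degree v)
    (hS : ∀ σ ∈ S, ∀ x ∈ insert v (G.neighborFinset v), σ.trans (Equiv.swap v x) ∈ S) :
    ∑ σ ∈ S, c v * (orderIncentive G κ σ v : ℝ) = #S * avgIncentive G c κ v := by
  unfold orderIncentive
  rw [← mul_sum, sum_max_countBefore_sub (by simp) hS hκ.1 (by simp; omega)]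
  simp only [avgIncentive, G.card_neighborFinset_eq_degree]
  ring

theorem sum_orderIncentive_lastAt_self {u : V} (hκ : κ u ≤ G.degree u) :
    ∑ σ ∈ lastAt n u, c u * (orderIncentive G κ σ u : ℝ)
      = #(lastAt n u) * (c u * ((G.degree u : ℝ) - κ u)) := by
  rw [← nsmul_eq_mul, ← sum_const]
  refine sum_congr rfl fun σ hσ => ?_
  rw [orderIncentive, countBefore_of_mem_lastAt hσ (by simp), G.card_neighborFinset_eq_degree,
    max_eq_right (sub_nonneg.2 hκ)]
  push_cast
  rfl

theorem sum_orderIncentive_lastAt_of_adj {u v : V} (hκ : 0 ≤ κ v ∧ κ v ≤ G.degree v)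
    (hadj : G.Adj u v) :
    ∑ σ ∈ lastAt n u, c v * (orderIncentive G κ σ v : ℝ)
      = #(lastAt n u) * avgIncentiveBefore G c κ v := by
  have hu : u ∈ G.neighborFinset v := by simpa using hadj.symm
  have hcard : #((G.neighborFinset v).erase u) + 1 = G.degree v := by
    rw [card_erase_add_one hu, G.card_neighborFinset_eq_degree]
  have hS : ∀ σ ∈ lastAt n u, ∀ x ∈ insert v ((G.neighborFinset v).erase u),
      σ.trans (Equiv.swap v x) ∈ lastAt n u := fun σ hσ x hx =>
    trans_swap_mem_lastAt hσ hadj.ne' <| by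
      rcases mem_insert.1 hx with rfl | hx
      exacts [hadj.ne', ne_of_mem_erase hx]
  calc ∑ σ ∈ lastAt n u, c v * (orderIncentive G κ σ v : ℝ)
      = c v * ∑ σ ∈ lastAt n u,
          ((max 0 ((countBefore σ ((G.neighborFinset v).erase u) v : ℤ) - κ v) : ℤ) : ℝ) := by
        rw [mul_sum]
        exact sum_congr rfl fun σ hσ => by
          rw [orderIncentive, countBefore_erase_of_mem_lastAt hσ]
    _ = #(lastAt n u) * avgIncentiveBefore G c κ v := by
        rw [sum_max_countBefore_sub (by simp) hS hκ.1 (by omega), avgIncentiveBefore,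
          ← hcard]
        push_cast
        ring

theorem sum_orderIncentive_lastAt_of_not_adj {u v : V} (hκ : 0 ≤ κ v ∧ κ v ≤ G.degree v)
    (hvu : v ≠ u) (hadj : ¬G.Adj u v) :
    ∑ σ ∈ lastAt n u, c v * (orderIncentive G κ σ v : ℝ)
      = #(lastAt n u) * avgIncentive G c κ v :=
  sum_orderIncentive_of_trans_swap_mem hκ fun σ hσ x hx =>
    trans_swap_mem_lastAt hσ hvu <| by
      rcases mem_insert.1 hx with rfl | hx
      exacts [hvu, fun hxu => hadj (hxu ▸ (G.mem_neighborFinset v x).1 hx).symm]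

theorem sum_orderCost_univ (hκ : ∀ v, 0 ≤ κ v ∧ κ v ≤ G.degree v) :
    ∑ σ : Fin n ≃ V, orderCost G c κ σ
      = Fintype.card (Fin n ≃ V) * ∑ v, avgIncentive G c κ v := by
  unfold orderCost
  rw [sum_comm, mul_sum, ← card_univ]
  exact sum_congr rfl fun v _ =>
    sum_orderIncentive_of_trans_swap_mem (hκ v) fun _ _ _ _ => mem_univ _

/-- Every ordering costs at least `betaW G c κ`, and on average they cost exactly that. -/
theorem orderCost_eq_betaW (hc : ∀ u, 0 ≤ c u) (hκ : ∀ v, 0 ≤ κ v ∧ κ v ≤ G.degree v)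
    (hext : betaW G c κ = ∑ v, avgIncentive G c κ v) (σ : Fin n ≃ V) :
    orderCost G c κ σ = betaW G c κ := by
  have hsum : ∑ _σ : Fin n ≃ V, betaW G c κ = ∑ σ : Fin n ≃ V, orderCost G c κ σ := by
    rw [sum_orderCost_univ hκ, sum_const, card_univ, nsmul_eq_mul, hext]
  exact ((sum_eq_sum_iff_of_le fun σ _ => betaW_le_orderCost hc σ).1 hsum σ
    (mem_univ σ)).symm

theorem sum_orderCost_lastAt (hκ : ∀ v, 0 ≤ κ v ∧ κ v ≤ G.degree v) (u : V) :
    ∑ σ ∈ lastAt n u, orderCost G c κ σ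
      = #(lastAt n u) * (c u * ((G.degree u : ℝ) - κ u)
        + ∑ v ∈ G.neighborFinset u, avgIncentiveBefore G c κ v
        + ∑ v ∈ (insert u (G.neighborFinset u))ᶜ, avgIncentive G c κ v) := by
  have hnear : ∑ v ∈ G.neighborFinset u, ∑ σ ∈ lastAt n u, c v * (orderIncentive G κ σ v : ℝ)
      = ∑ v ∈ G.neighborFinset u, #(lastAt n u) * avgIncentiveBefore G c κ v :=
    sum_congr rfl fun v hv =>
      sum_orderIncentive_lastAt_of_adj (hκ v) ((G.mem_neighborFinset u v).1 hv)
  have hfar : ∑ v ∈ (insert u (G.neighborFinset u))ᶜ,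
        ∑ σ ∈ lastAt n u, c v * (orderIncentive G κ σ v : ℝ)
      = ∑ v ∈ (insert u (G.neighborFinset u))ᶜ, #(lastAt n u) * avgIncentive G c κ v :=
    sum_congr rfl fun v hv => by
      have ⟨hvu, hadj⟩ : v ≠ u ∧ ¬G.Adj u v := by simpa [not_or] using hv
      exact sum_orderIncentive_lastAt_of_not_adj (hκ v) hvu hadj
  unfold orderCost
  rw [sum_comm, ← sum_add_sum_compl (insert u (G.neighborFinset u)), sum_insert (by simp),
    sum_orderIncentive_lastAt_self (hκ u).2, hnear, hfar, ← mul_sum, ← mul_sum]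
  ring

end Incentives

/-- Key local identity for extremal triples of the partial-incentives bound. -/
theorem extremal_local_identity_beta (G : SimpleGraph V) [DecidableRel G.Adj]
    (c : V → ℝ) (hc : ∀ u, 0 < c u)
    (κ : V → ℤ) (hκ : ∀ u, 0 ≤ κ u ∧ κ u ≤ (G.degree u : ℤ))
    (hext : betaW G c κ = ∑ u : V,
        c u * (((G.degree u : ℝ) - κ u) * ((G.degree u : ℝ) - κ u + 1)) / (2 * (G.degree u + 1))) :
    ∀ u : V, c u * ((G.degree u : ℝ) - κ u) =
        c u * (((G.degree u : ℝ) - κ u) * ((G.degree u : ℝ) - κ u + 1)) / (2 * (G.degree u + 1))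
      + ∑ v ∈ G.neighborFinset u,
          c v * (((G.degree v : ℝ) - κ v) * ((G.degree v : ℝ) - κ v + 1)) / (2 * (G.degree v + 1))
      - ∑ v ∈ G.neighborFinset u,
          c v * (((G.degree v : ℝ) - κ v - 1) * ((G.degree v : ℝ) - κ v)) / (2 * (G.degree v : ℝ)) := by
  intro u
  have hcost := orderCost_eq_betaW (n := Fintype.card V) (fun v => (hc v).le) hκ hext
  have hpos : (0 : ℝ) < #(lastAt (Fintype.card V) u) :=
    Nat.cast_pos.2 (card_pos.2 (lastAt_nonempty (Fintype.equivFin V).symm u))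
  have hlocal := sum_orderCost_lastAt (n := Fintype.card V) (c := c) hκ u
  rw [sum_congr rfl fun σ _ => hcost σ, sum_const, nsmul_eq_mul] at hlocal
  have hβ := mul_left_cancel₀ hpos.ne' hlocal
  rw [hext, ← sum_add_sum_compl (insert u (G.neighborFinset u)), sum_insert (by simp)] at hβ
  simp only [avgIncentive, avgIncentiveBefore] at hβ
  linarith
end
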